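/- Let χ₀ > 0, T₀ > 0, and let Ĉ, Ŝ : [0,∞) → ℝ be bounded continuous functions such that p ↦ |Ĉ(ω_ε(p))|/ω_ε(p) and p ↦ |Ŝ(ω_ε(p))|/ω_ε(p) are integrable, where ω_ε(p) = √(p² + ε²χ₀). Define 𝒰^R(φ,T) = (1/π) ∫₀^∞ (p/ω_ε(p)) [cos(pφ + (p − ω_ε(p)) T/ε²) Ĉ(ω_ε(p)) + sin(pφ + (p − ω_ε(p)) T/ε²) Ŝ(ω_ε(p))] dp and 𝒰(φ,T) = (1/π) ∫_{√ε}^∞ (p/ω_ε(p)) [cos(pφ − χ₀T/(2p)) Ĉ(ω_ε(p)) + sin(pφ − χ₀T/(2p)) Ŝ(ω_ε(p))] dp. Then there exist ε₀ > 0 and C > 0 such that for all 0 < ε < ε₀, all φ ∈ ℝ and all 0 ≤ T ≤ T₀, |𝒰^R(φ,T) − 𝒰(φ,T)| ≤ C √ε (‖Ĉ‖_{L^∞} + ‖Ŝ‖_{L^∞}). -/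

import Mathlib

/-!
Split `∫₀^∞` at `√ε`. On `(0, √ε]` the integrand of `𝒰^R` is bounded by `‖Ĉ‖ + ‖Ŝ‖`, since
`p ≤ ω_ε(p)`, which costs `O(√ε)`. On `(√ε, ∞)` the two phases differ by at most
`T χ₀² ε² / (8p³)` and `cos`, `sin` are 1-Lipschitz, so the integrands differ by `O(ε² / p³)`,
whose integral over `(√ε, ∞)` is `O(ε)`.
-/

open MeasureTheory Set

noncomputable section

/-- The dispersion relation `ω_ε(p) = √(p² + ε²χ₀)`. -/
def omg (χ₀ ε p : ℝ) : ℝ := Real.sqrt (p ^ 2 + ε ^ 2 * χ₀)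

lemma abs_cos_mul_add_sin_mul_le (x C S : ℝ) :
    |Real.cos x * C + Real.sin x * S| ≤ |C| + |S| := by
  calc |Real.cos x * C + Real.sin x * S|
      ≤ |Real.cos x| * |C| + |Real.sin x| * |S| := by
        rw [← abs_mul, ← abs_mul]; exact abs_add_le _ _
    _ ≤ 1 * |C| + 1 * |S| := by
        gcongr
        exacts [Real.abs_cos_le_one x, Real.abs_sin_le_one x]
    _ = |C| + |S| := by ring

lemma abs_cos_mul_add_sin_mul_sub_le (a b C S : ℝ) :
    |(Real.cos a * C + Real.sin a * S) - (Real.cos b * C + Real.sin b * S)|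
      ≤ |a - b| * (|C| + |S|) := by
  calc |(Real.cos a * C + Real.sin a * S) - (Real.cos b * C + Real.sin b * S)|
      = |(Real.cos a - Real.cos b) * C + (Real.sin a - Real.sin b) * S| := by ring_nf
    _ ≤ |Real.cos a - Real.cos b| * |C| + |Real.sin a - Real.sin b| * |S| := by
        rw [← abs_mul, ← abs_mul]; exact abs_add_le _ _
    _ ≤ |a - b| * |C| + |a - b| * |S| :=
        add_le_add (mul_le_mul_of_nonneg_right (Real.abs_cos_sub_cos_le a b) (abs_nonneg C))
          (mul_le_mul_of_nonneg_right (Real.abs_sin_sub_sin_le a b) (abs_nonneg S))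
    _ = |a - b| * (|C| + |S|) := by ring

lemma abs_div_mul_le_abs {p w : ℝ} (hp : 0 ≤ p) (hpw : p ≤ w) (y : ℝ) :
    |p / w * y| ≤ |y| := by
  rw [abs_mul, abs_of_nonneg (div_nonneg hp (hp.trans hpw))]
  exact mul_le_of_le_one_left (abs_nonneg y) (div_le_one_of_le₀ hpw (hp.trans hpw))

section Dispersion

variable {χ₀ ε : ℝ}

@[fun_prop]
lemma continuous_omg : Continuous (omg χ₀ ε) := by
  unfold omg
  fun_prop

lemma omg_pos (hχ₀ : 0 < χ₀) (hε : ε ≠ 0) (p : ℝ) : 0 < omg χ₀ ε p :=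
  Real.sqrt_pos.mpr (by positivity)

lemma omg_sq (hχ₀ : 0 ≤ χ₀) (p : ℝ) : omg χ₀ ε p ^ 2 = p ^ 2 + ε ^ 2 * χ₀ :=
  Real.sq_sqrt (by positivity)

lemma le_omg (hχ₀ : 0 ≤ χ₀) (p : ℝ) : p ≤ omg χ₀ ε p :=
  (le_abs_self p).trans (Real.abs_le_sqrt (by nlinarith [sq_nonneg ε]))

/-- `(p - ω_ε(p)) / ε² = -χ₀ / (p + ω_ε(p))` and `p + ω_ε(p) ≥ 2p`, so replacing the phase by its
short-pulse limit `-χ₀ / (2p)` costs `O(ε² / p³)`. -/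
lemma abs_phase_sub_shortPulse_phase_le (hχ₀ : 0 < χ₀) (hε : ε ≠ 0) {p : ℝ} (hp : 0 < p)
    (φ : ℝ) {T : ℝ} (hT : 0 ≤ T) :
    |(p * φ + (p - omg χ₀ ε p) * T / ε ^ 2) - (p * φ - χ₀ * T / (2 * p))|
      ≤ T * χ₀ ^ 2 * ε ^ 2 / (8 * p ^ 3) := by
  set w := omg χ₀ ε p
  have hw : p ≤ w := le_omg hχ₀.le p
  have hpw : 0 < p + w := by linarith
  have hexact : (p * φ + (p - w) * T / ε ^ 2) - (p * φ - χ₀ * T / (2 * p))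
      = T * χ₀ ^ 2 * ε ^ 2 / (2 * p * (p + w) ^ 2) := by
    field_simp
    linear_combination (ε ^ 2 * T * χ₀ - 2 * p * T * (p + w)) * omg_sq (ε := ε) hχ₀.le p
  rw [hexact, abs_of_nonneg (by positivity)]
  have hsum : (2 * p) ^ 2 ≤ (p + w) ^ 2 := by gcongr; linarith
  exact div_le_div_of_nonneg_left (by positivity) (by positivity) (by nlinarith)

end Dispersion

section Integrands

variable {χ₀ ε MC MS : ℝ} {Chat Shat : ℝ → ℝ}

/-- The integrand of `𝒰^R`. -/
def rightMovingIntegrand (χ₀ ε : ℝ) (Chat Shat : ℝ → ℝ) (φ T p : ℝ) : ℝ :=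
  p / omg χ₀ ε p * (Real.cos (p * φ + (p - omg χ₀ ε p) * T / ε ^ 2) * Chat (omg χ₀ ε p)
    + Real.sin (p * φ + (p - omg χ₀ ε p) * T / ε ^ 2) * Shat (omg χ₀ ε p))

/-- The integrand of `𝒰`. -/
def shortPulseIntegrand (χ₀ ε : ℝ) (Chat Shat : ℝ → ℝ) (φ T p : ℝ) : ℝ :=
  p / omg χ₀ ε p * (Real.cos (p * φ - χ₀ * T / (2 * p)) * Chat (omg χ₀ ε p)
    + Real.sin (p * φ - χ₀ * T / (2 * p)) * Shat (omg χ₀ ε p))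

lemma continuous_rightMovingIntegrand (hχ₀ : 0 < χ₀) (hε : ε ≠ 0) (hC : Continuous Chat)
    (hS : Continuous Shat) (φ T : ℝ) :
    Continuous (rightMovingIntegrand χ₀ ε Chat Shat φ T) := by
  unfold rightMovingIntegrand
  fun_prop (disch := exact fun p => (omg_pos hχ₀ hε p).ne')

lemma continuousOn_shortPulseIntegrand (hχ₀ : 0 < χ₀) (hε : ε ≠ 0) (hC : Continuous Chat)
    (hS : Continuous Shat) (φ T : ℝ) :
    ContinuousOn (shortPulseIntegrand χ₀ ε Chat Shat φ T) (Ioi 0) := by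
  unfold shortPulseIntegrand
  fun_prop (disch := intro p hp; first
    | exact (omg_pos hχ₀ hε p).ne'
    | have : 0 < p := mem_Ioi.mp hp; positivity)

lemma abs_rightMovingIntegrand_le (hχ₀ : 0 ≤ χ₀) (hC : ∀ k, 0 ≤ k → |Chat k| ≤ MC)
    (hS : ∀ k, 0 ≤ k → |Shat k| ≤ MS) (φ T : ℝ) {p : ℝ} (hp : 0 ≤ p) :
    |rightMovingIntegrand χ₀ ε Chat Shat φ T p| ≤ MC + MS :=
  (abs_div_mul_le_abs hp (le_omg hχ₀ p) _).trans ((abs_cos_mul_add_sin_mul_le _ _ _).trans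
    (add_le_add (hC _ (Real.sqrt_nonneg _)) (hS _ (Real.sqrt_nonneg _))))

lemma abs_rightMovingIntegrand_sub_shortPulseIntegrand_le (hχ₀ : 0 < χ₀) (hε : ε ≠ 0)
    (hC : ∀ k, 0 ≤ k → |Chat k| ≤ MC) (hS : ∀ k, 0 ≤ k → |Shat k| ≤ MS) (φ : ℝ) {T p : ℝ}
    (hT : 0 ≤ T) (hp : 0 < p) :
    |rightMovingIntegrand χ₀ ε Chat Shat φ T p - shortPulseIntegrand χ₀ ε Chat Shat φ T p|
      ≤ (MC + MS) * (T * χ₀ ^ 2 * ε ^ 2 / 8) / p ^ 3 := by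
  have hCS : |Chat (omg χ₀ ε p)| + |Shat (omg χ₀ ε p)| ≤ MC + MS :=
    add_le_add (hC _ (Real.sqrt_nonneg _)) (hS _ (Real.sqrt_nonneg _))
  unfold rightMovingIntegrand shortPulseIntegrand
  rw [← mul_sub]
  refine (abs_div_mul_le_abs hp.le (le_omg hχ₀.le p) _).trans
    ((abs_cos_mul_add_sin_mul_sub_le _ _ _ _).trans ?_)
  calc _ ≤ T * χ₀ ^ 2 * ε ^ 2 / (8 * p ^ 3) * (MC + MS) :=
        mul_le_mul (abs_phase_sub_shortPulse_phase_le hχ₀ hε hp φ hT) hCS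
          (by positivity) (by positivity)
    _ = (MC + MS) * (T * χ₀ ^ 2 * ε ^ 2 / 8) / p ^ 3 := by ring

end Integrands

section Truncation

variable {s : ℝ}

lemma div_pow_three_eq_mul_rpow {p : ℝ} (hp : 0 < p) (K : ℝ) : K / p ^ 3 = K * p ^ (-3 : ℝ) := by
  rw [Real.rpow_neg hp.le, Real.rpow_ofNat, div_eq_mul_inv]

lemma integrableOn_Ioi_div_pow_three (hs : 0 < s) (K : ℝ) :
    IntegrableOn (fun p : ℝ => K / p ^ 3) (Ioi s) :=
  IntegrableOn.congr_fun ((integrableOn_Ioi_rpow_of_lt (a := -3) (by norm_num) hs).const_mul K)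
    (fun p hp => (div_pow_three_eq_mul_rpow (hs.trans hp) K).symm) measurableSet_Ioi

lemma setIntegral_Ioi_div_pow_three (hs : 0 < s) (K : ℝ) :
    ∫ p in Ioi s, K / p ^ 3 = K / (2 * s ^ 2) := by
  rw [setIntegral_congr_fun measurableSet_Ioi
      (fun p hp => div_pow_three_eq_mul_rpow (hs.trans hp) K),
    integral_const_mul, integral_Ioi_rpow_of_lt (by norm_num) hs,
    show (-3 : ℝ) + 1 = -2 by norm_num, Real.rpow_neg hs.le, Real.rpow_two]
  field_simp

lemma setIntegral_Ioi_sub_setIntegral_Ioi {f g : ℝ → ℝ} {a : ℝ} (has : a ≤ s)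
    (hf : IntegrableOn f (Ioi a)) (hfg : IntegrableOn (f - g) (Ioi s)) :
    (∫ p in Ioi a, f p) - ∫ p in Ioi s, g p
      = (∫ p in Ioc a s, f p) + ∫ p in Ioi s, (f - g) p := by
  have hfs : IntegrableOn f (Ioi s) := hf.mono_set (Ioi_subset_Ioi has)
  have hgs : IntegrableOn g (Ioi s) := by simpa using hfs.sub hfg
  have hsplit := setIntegral_union (Ioc_disjoint_Ioi le_rfl) measurableSet_Ioi
    (hf.mono_set Ioc_subset_Ioi_self) hfs
  rw [Ioc_union_Ioi_eq_Ioi has] at hsplit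
  rw [hsplit, Pi.sub_def, integral_sub hfs hgs]
  ring

lemma abs_setIntegral_Ioi_sub_setIntegral_Ioi_le {f g : ℝ → ℝ} {a M K : ℝ} (has : a ≤ s)
    (hs : 0 < s) (hM : 0 ≤ M) (hK : 0 ≤ K)
    (hf : AEStronglyMeasurable f (volume.restrict (Ioi a)))
    (hg : AEStronglyMeasurable g (volume.restrict (Ioi s)))
    (hfM : ∀ p ∈ Ioc a s, |f p| ≤ M) (hfg : ∀ p ∈ Ioi s, |f p - g p| ≤ K / p ^ 3) :
    |(∫ p in Ioi a, f p) - ∫ p in Ioi s, g p| ≤ M * (s - a) + K / (2 * s ^ 2) := by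
  have hfg_le : ∀ᵐ p ∂volume.restrict (Ioi s), ‖(f - g) p‖ ≤ K / p ^ 3 :=
    ae_restrict_of_forall_mem measurableSet_Ioi hfg
  have hfg_int : IntegrableOn (f - g) (Ioi s) :=
    (integrableOn_Ioi_div_pow_three hs K).mono'
      ((hf.mono_set (Ioi_subset_Ioi has)).sub hg) hfg_le
  have hf_Ioc : IntegrableOn f (Ioc a s) :=
    (integrableOn_const (C := M) measure_Ioc_lt_top.ne).mono' (hf.mono_set Ioc_subset_Ioi_self)
      (ae_restrict_of_forall_mem measurableSet_Ioc hfM)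
  have hIoc : |∫ p in Ioc a s, f p| ≤ M * (s - a) := by
    have h := norm_setIntegral_le_of_norm_le_const (μ := volume) measure_Ioc_lt_top
      fun p hp => (Real.norm_eq_abs (f p)).trans_le (hfM p hp)
    rwa [Real.norm_eq_abs, Real.volume_real_Ioc, max_eq_left (sub_nonneg.mpr has)] at h
  have hIoi : |∫ p in Ioi s, (f - g) p| ≤ K / (2 * s ^ 2) := by
    rw [← setIntegral_Ioi_div_pow_three hs K]
    exact norm_integral_le_of_norm_le (integrableOn_Ioi_div_pow_three hs K) hfg_le
  by_cases hfi : IntegrableOn f (Ioi a)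
  · rw [setIntegral_Ioi_sub_setIntegral_Ioi has hfi hfg_int]
    exact (abs_add_le _ _).trans (add_le_add hIoc hIoi)
  · -- then `g` is not integrable either, and both integrals take the junk value `0`
    have hgi : ¬ IntegrableOn g (Ioi s) := fun hgi => hfi <| by
      rw [← Ioc_union_Ioi_eq_Ioi has]
      exact hf_Ioc.union (by simpa using hgi.add hfg_int)
    rw [integral_undef hfi, integral_undef hgi, sub_zero, abs_zero]
    have : 0 ≤ s - a := sub_nonneg.mpr has
    positivity

end Truncation

theorem statement18_general (χ₀ T₀ : ℝ) (hχ₀ : 0 < χ₀) (hT₀ : 0 < T₀)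
    (Chat Shat : ℝ → ℝ) (hChat : Continuous Chat) (hShat : Continuous Shat) :
    ∃ ε₀ > (0 : ℝ), ∃ C > (0 : ℝ), ∀ ε : ℝ, 0 < ε → ε < ε₀ →
      ∀ MC MS : ℝ,
        (∀ k : ℝ, 0 ≤ k → |Chat k| ≤ MC) →
        (∀ k : ℝ, 0 ≤ k → |Shat k| ≤ MS) →
        ∀ UR U : ℝ → ℝ → ℝ,
          (∀ φ T : ℝ, UR φ T = (1 / Real.pi) *
            ∫ p in Ioi (0 : ℝ), (p / omg χ₀ ε p) *
              (Real.cos (p * φ + (p - omg χ₀ ε p) * T / ε ^ 2) * Chat (omg χ₀ ε p)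
                + Real.sin (p * φ + (p - omg χ₀ ε p) * T / ε ^ 2) * Shat (omg χ₀ ε p))) →
          (∀ φ T : ℝ, U φ T = (1 / Real.pi) *
            ∫ p in Ioi (Real.sqrt ε), (p / omg χ₀ ε p) *
              (Real.cos (p * φ - χ₀ * T / (2 * p)) * Chat (omg χ₀ ε p)
                + Real.sin (p * φ - χ₀ * T / (2 * p)) * Shat (omg χ₀ ε p))) →
          ∀ φ T : ℝ, 0 ≤ T → T ≤ T₀ →
            |UR φ T - U φ T| ≤ C * Real.sqrt ε * (MC + MS) := by
  refine ⟨1, one_pos, (1 + T₀ * χ₀ ^ 2 / 16) / Real.pi, by positivity, ?_⟩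
  intro ε hε hε1 MC MS hMC hMS UR U hUR hU φ T hT hTT
  have hM : 0 ≤ MC + MS := add_nonneg ((abs_nonneg _).trans (hMC 0 le_rfl))
    ((abs_nonneg _).trans (hMS 0 le_rfl))
  have hs : 0 < √ε := Real.sqrt_pos.mpr hε
  have hεs : ε ≤ √ε := Real.le_sqrt_of_sq_le (by nlinarith)
  have hdiff := abs_setIntegral_Ioi_sub_setIntegral_Ioi_le hs.le hs hM
    (K := (MC + MS) * (T₀ * χ₀ ^ 2 * ε ^ 2 / 8)) (by positivity)
    (continuous_rightMovingIntegrand hχ₀ hε.ne' hChat hShat φ T).aestronglyMeasurable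
    (((continuousOn_shortPulseIntegrand hχ₀ hε.ne' hChat hShat φ T).mono
      (Ioi_subset_Ioi hs.le)).aestronglyMeasurable measurableSet_Ioi)
    (fun p hp => abs_rightMovingIntegrand_le hχ₀.le hMC hMS φ T hp.1.le)
    (fun p hp => have hp0 : 0 < p := hs.trans hp
      (abs_rightMovingIntegrand_sub_shortPulseIntegrand_le hχ₀ hε.ne' hMC hMS φ hT hp0).trans
        (by gcongr))
  rw [sub_zero] at hdiff
  rw [hUR, hU, ← mul_sub, abs_mul, abs_of_pos (by positivity)]
  calc 1 / Real.pi * |_|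
      ≤ 1 / Real.pi * ((MC + MS) * √ε
        + (MC + MS) * (T₀ * χ₀ ^ 2 * ε ^ 2 / 8) / (2 * √ε ^ 2)) := by gcongr; exact hdiff
    _ = (1 / Real.pi) * (MC + MS) * (√ε + T₀ * χ₀ ^ 2 / 16 * ε) := by
        rw [Real.sq_sqrt hε.le]; field_simp; ring
    _ ≤ (1 / Real.pi) * (MC + MS) * (√ε + T₀ * χ₀ ^ 2 / 16 * √ε) := by gcongr
    _ = (1 + T₀ * χ₀ ^ 2 / 16) / Real.pi * √ε * (MC + MS) := by ring

/-- Lemma (the right-moving part is approximated by the short-pulse solution):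
with `𝒰^R` the right-moving part in characteristic variables and `𝒰` the truncated
explicit solution of the linearized short-pulse equation, one has
`|𝒰^R(φ,T) − 𝒰(φ,T)| ≤ C √ε (‖Ĉ‖_∞ + ‖Ŝ‖_∞)` for all `φ` and `0 ≤ T ≤ T₀`. -/
theorem statement18 (χ₀ T₀ : ℝ) (hχ₀ : 0 < χ₀) (hT₀ : 0 < T₀)
    (Chat Shat : ℝ → ℝ) (hChat : Continuous Chat) (hShat : Continuous Shat)
    (hintC : ∀ ε : ℝ, 0 < ε →
      IntegrableOn (fun p : ℝ => |Chat (omg χ₀ ε p)| / omg χ₀ ε p) (Ioi 0))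
    (hintS : ∀ ε : ℝ, 0 < ε →
      IntegrableOn (fun p : ℝ => |Shat (omg χ₀ ε p)| / omg χ₀ ε p) (Ioi 0)) :
    ∃ ε₀ > (0 : ℝ), ∃ C > (0 : ℝ), ∀ ε : ℝ, 0 < ε → ε < ε₀ →
      ∀ MC MS : ℝ,
        (∀ k : ℝ, 0 ≤ k → |Chat k| ≤ MC) →
        (∀ k : ℝ, 0 ≤ k → |Shat k| ≤ MS) →
        ∀ UR U : ℝ → ℝ → ℝ,
          (∀ φ T : ℝ, UR φ T = (1 / Real.pi) *
            ∫ p in Ioi (0 : ℝ), (p / omg χ₀ ε p) *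
              (Real.cos (p * φ + (p - omg χ₀ ε p) * T / ε ^ 2) * Chat (omg χ₀ ε p)
                + Real.sin (p * φ + (p - omg χ₀ ε p) * T / ε ^ 2) * Shat (omg χ₀ ε p))) →
          (∀ φ T : ℝ, U φ T = (1 / Real.pi) *
            ∫ p in Ioi (Real.sqrt ε), (p / omg χ₀ ε p) *
              (Real.cos (p * φ - χ₀ * T / (2 * p)) * Chat (omg χ₀ ε p)
                + Real.sin (p * φ - χ₀ * T / (2 * p)) * Shat (omg χ₀ ε p))) →
          ∀ φ T : ℝ, 0 ≤ T → T ≤ T₀ →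
            |UR φ T - U φ T| ≤ C * Real.sqrt ε * (MC + MS) :=
  statement18_general χ₀ T₀ hχ₀ hT₀ Chat Shat hChat hShat
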